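/- For 0 < m < 1, the derivative identity 2m * d/dm K0(m) = E0(m)/(1-m) - K0(m) holds. -/

import Mathlib

/-!
Write `Δ(m, s) = √(1 - m sin² s)`. Differentiating under the integral sign,
`K0'(m) = ∫ sin² s / (2 Δ³)`, and since `m sin² s = 1 - Δ²` this is `(∫ Δ⁻³ - K0 m) / (2m)`.
The remaining integral is evaluated by an exact derivative:
`d/ds (sin s cos s / Δ) = (Δ - (1 - m) / Δ³) / m`, and `sin s cos s` vanishes at `0` and `π/2`,
so `∫ Δ⁻³ = E0 m / (1 - m)`.
-/

open Real

/-- The complete elliptic integral of the first kind, as a function of the modulus `m`. -/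
noncomputable def K0 (m : ℝ) : ℝ :=
  ∫ s in (0:ℝ)..(π/2), 1 / Real.sqrt (1 - m * Real.sin s ^ 2)

/-- The complete elliptic integral of the second kind, as a function of the modulus `m`. -/
noncomputable def E0 (m : ℝ) : ℝ :=
  ∫ s in (0:ℝ)..(π/2), Real.sqrt (1 - m * Real.sin s ^ 2)

lemma min_one_one_sub_le_one_sub_mul_sin_sq (x s : ℝ) : min 1 (1 - x) ≤ 1 - x * sin s ^ 2 := by
  have h0 := sq_nonneg (sin s)
  have h1 := sin_sq_le_one s
  rcases le_total x 0 with hx | hx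
  · exact (min_le_left _ _).trans (by nlinarith)
  · exact (min_le_right _ _).trans (by nlinarith)

lemma one_sub_mul_sin_sq_pos {x : ℝ} (hx : x < 1) (s : ℝ) : 0 < 1 - x * sin s ^ 2 :=
  (lt_min one_pos (sub_pos.2 hx)).trans_le (min_one_one_sub_le_one_sub_mul_sin_sq x s)

lemma hasDerivAt_one_div_sqrt_one_sub_mul {a x : ℝ} (h : 0 < 1 - x * a) :
    HasDerivAt (fun x ↦ 1 / √(1 - x * a)) (a / (2 * (√(1 - x * a) * (1 - x * a)))) x := by
  have hinner : HasDerivAt (fun x ↦ 1 - x * a) (-a) x := by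
    simpa using ((hasDerivAt_id x).mul_const a).const_sub 1
  have := (hinner.sqrt h.ne').fun_inv (sqrt_pos.2 h).ne'
  simp only [one_div]
  refine this.congr_deriv ?_
  rw [sq_sqrt h.le]
  field_simp

lemma hasDerivAt_sin_mul_cos_div_sqrt {m : ℝ} (hm0 : m ≠ 0) (hm1 : m < 1) (s : ℝ) :
    HasDerivAt (fun s ↦ sin s * cos s / √(1 - m * sin s ^ 2))
      ((√(1 - m * sin s ^ 2) - (1 - m) / (√(1 - m * sin s ^ 2) * (1 - m * sin s ^ 2))) / m) s := by
  have ht := one_sub_mul_sin_sq_pos hm1 s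
  have hsqrt := ((((hasDerivAt_sin s).fun_pow 2).const_mul m).const_sub 1).sqrt ht.ne'
  have hr := sqrt_pos.2 ht
  refine (((hasDerivAt_sin s).fun_mul (hasDerivAt_cos s)).fun_div hsqrt hr.ne').congr_deriv ?_
  have hss := sq_sqrt ht.le
  have ht' := ht.ne'
  set r := √(1 - m * sin s ^ 2)
  field_simp
  rw [hss]
  field_simp
  linear_combination 2 * m * sin_sq_add_cos_sq s

lemma continuous_one_div_sqrt_one_sub_mul_sin_sq {m : ℝ} (hm : m < 1) :
    Continuous fun s ↦ 1 / √(1 - m * sin s ^ 2) :=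
  continuous_const.div (by fun_prop) fun s ↦ (sqrt_pos.2 (one_sub_mul_sin_sq_pos hm s)).ne'

lemma continuous_div_sqrt_mul_self_one_sub_mul_sin_sq (c : ℝ) {m : ℝ} (hm : m < 1) :
    Continuous fun s ↦ c / (√(1 - m * sin s ^ 2) * (1 - m * sin s ^ 2)) :=
  continuous_const.div (by fun_prop) fun s ↦
    (mul_pos (sqrt_pos.2 (one_sub_mul_sin_sq_pos hm s)) (one_sub_mul_sin_sq_pos hm s)).ne'

lemma integral_one_div_sqrt_mul_self_one_sub_mul_sin_sq {m : ℝ} (hm0 : m ≠ 0) (hm1 : m < 1) :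
    ∫ s in (0)..(π / 2), 1 / (√(1 - m * sin s ^ 2) * (1 - m * sin s ^ 2)) = E0 m / (1 - m) := by
  have hcE : Continuous fun s ↦ √(1 - m * sin s ^ 2) := by fun_prop
  have hcD := continuous_div_sqrt_mul_self_one_sub_mul_sin_sq (1 - m) hm1
  have hftc := intervalIntegral.integral_eq_sub_of_hasDerivAt
    (fun s _ ↦ hasDerivAt_sin_mul_cos_div_sqrt hm0 hm1 s)
    (((hcE.sub hcD).div_const m).intervalIntegrable 0 (π / 2))
  rw [intervalIntegral.integral_div, intervalIntegral.integral_sub (hcE.intervalIntegrable _ _)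
    (hcD.intervalIntegrable _ _)] at hftc
  simp only [sin_zero, cos_pi_div_two, mul_zero, zero_mul, zero_div, sub_zero,
    div_eq_mul_one_div (1 - m), intervalIntegral.integral_const_mul] at hftc
  rw [div_eq_zero_iff, sub_eq_zero, or_iff_left hm0] at hftc
  rw [E0, hftc, mul_div_cancel_left₀ _ (sub_ne_zero.2 hm1.ne')]

lemma hasDerivAt_K0 {m : ℝ} (hm : m < 1) :
    HasDerivAt K0
      (∫ s in (0)..(π / 2), sin s ^ 2 / (2 * (√(1 - m * sin s ^ 2) * (1 - m * sin s ^ 2)))) m := by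
  set c := min 1 (1 - m) / 2
  have hc : 0 < c := half_pos (lt_min one_pos (sub_pos.2 hm))
  have hc1 : c ≤ 1 / 2 := by grind
  have hcm : c ≤ (1 - m) / 2 := by grind
  have hc_le : ∀ x ∈ Metric.ball m c, ∀ s, c ≤ 1 - x * sin s ^ 2 := by
    intro x hx s
    rw [Metric.mem_ball, Real.dist_eq, abs_lt] at hx
    exact (le_min (by linarith) (by linarith)).trans (min_one_one_sub_le_one_sub_mul_sin_sq x s)
  have hpos : ∀ x ∈ Metric.ball m c, ∀ s, 0 < 1 - x * sin s ^ 2 :=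
    fun x hx s ↦ hc.trans_le (hc_le x hx s)
  refine (intervalIntegral.hasDerivAt_integral_of_dominated_loc_of_deriv_le
    (μ := MeasureTheory.volume) (a := 0) (b := π / 2)
    (F := fun x s ↦ 1 / √(1 - x * sin s ^ 2))
    (F' := fun x s ↦ sin s ^ 2 / (2 * (√(1 - x * sin s ^ 2) * (1 - x * sin s ^ 2))))
    (bound := fun _ ↦ 1 / (2 * (√c * c))) (Metric.ball_mem_nhds m hc) ?_
    ((continuous_one_div_sqrt_one_sub_mul_sin_sq hm).intervalIntegrable _ _) ?_ ?_
    intervalIntegrable_const ?_).2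
  · exact .of_forall fun x ↦ (by fun_prop : Measurable _).aestronglyMeasurable
  · refine (Continuous.div (by fun_prop) (by fun_prop) fun s ↦ ?_).aestronglyMeasurable
    exact (mul_pos two_pos (mul_pos (sqrt_pos.2 (one_sub_mul_sin_sq_pos hm s))
      (one_sub_mul_sin_sq_pos hm s))).ne'
  · refine .of_forall fun s _ x hx ↦ ?_
    rw [norm_of_nonneg (by have := hpos x hx s; positivity)]
    have := hc_le x hx s
    gcongr
    exact sin_sq_le_one s
  · exact .of_forall fun s _ x hx ↦ hasDerivAt_one_div_sqrt_one_sub_mul (hpos x hx s)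

lemma integral_sin_sq_div_eq {m : ℝ} (hm0 : m ≠ 0) (hm1 : m < 1) :
    ∫ s in (0)..(π / 2), sin s ^ 2 / (2 * (√(1 - m * sin s ^ 2) * (1 - m * sin s ^ 2))) =
      ((∫ s in (0)..(π / 2), 1 / (√(1 - m * sin s ^ 2) * (1 - m * sin s ^ 2))) - K0 m) / (2 * m) := by
  have hsplit : ∀ s, sin s ^ 2 / (2 * (√(1 - m * sin s ^ 2) * (1 - m * sin s ^ 2))) =
      (1 / (√(1 - m * sin s ^ 2) * (1 - m * sin s ^ 2)) - 1 / √(1 - m * sin s ^ 2)) / (2 * m) := by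
    intro s
    have ht := one_sub_mul_sin_sq_pos hm1 s
    have hmS : m * sin s ^ 2 = 1 - (1 - m * sin s ^ 2) := by ring
    generalize 1 - m * sin s ^ 2 = t at ht hmS ⊢
    have hr := sqrt_pos.2 ht
    field_simp
    linear_combination hmS
  simp_rw [hsplit]
  rw [intervalIntegral.integral_div, intervalIntegral.integral_sub
    ((continuous_div_sqrt_mul_self_one_sub_mul_sin_sq 1 hm1).intervalIntegrable _ _)
    ((continuous_one_div_sqrt_one_sub_mul_sin_sq hm1).intervalIntegrable _ _), K0]

theorem elliptic_K_derivative (m : ℝ) (hm0 : 0 < m) (hm1 : m < 1) :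
    HasDerivAt K0 ((E0 m / (1 - m) - K0 m) / (2*m)) m := by
  have h := hasDerivAt_K0 hm1
  rwa [integral_sin_sq_div_eq hm0.ne' hm1,
    integral_one_div_sqrt_mul_self_one_sub_mul_sin_sq hm0.ne' hm1] at h
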